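/- Assume λ₁, …, λₙ are pairwise distinct and all nonzero. For an n-dimensional subspace U ⊆ V the following are equivalent: (i) U is isotropic for both B and B' (i.e. U is a common Lagrangian subspace of the two symplectic forms B and B'); (ii) U ∩ Wᵢ ≠ 0 for every i; (iii) dim(U ∩ Uᵢ) = n − 1 for every i, where Uᵢ = ⊕_{j ≠ i} Wⱼ is the kernel of Bᵢ. (In particular, the common Lagrangian n-spaces of two general 2-forms on ℂ^{2n} form a Segre n-fold P¹ × ⋯ × P¹ in the Grassmannian G(n,2n).) -/

import Mathlib

/-!
If `U ∩ Wᵢ ≠ 0` for all `i`, nonzero vectors `xᵢ ∈ U ∩ Wᵢ` form a basis of `U`, and every `Bⱼ`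
vanishes on it. Conversely, `B' (x, y) = B (x, T y)` for the operator `T` acting on `Wᵢ` as
`λᵢ`, so a common Lagrangian `U` satisfies `T U ⊆ U^⊥ = U`. As the `λᵢ` are distinct, the
eigenspaces of `T` are the `Wᵢ`, hence `U = ⨁ (U ∩ Wᵢ)`; since `Wᵢ` is not `B`-isotropic, each
`U ∩ Wᵢ` has dimension at most one, and `dim U = n` forces all of them to be nonzero.
Under (ii), `U ∩ Uᵢ` contains the `xⱼ` with `j ≠ i` but not `xᵢ`. Under (iii), the `n - 1`
hyperplanes `U ∩ Uⱼ` (`j ≠ i`) of `U` meet in a nonzero subspace of `U ∩ Wᵢ`.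
-/

open Module

/-- A subspace `U` is *isotropic* for the bilinear form `C` if `C` vanishes identically
on `U × U`. -/
def IsIsotropic {V : Type*} [AddCommGroup V] [Module ℂ V]
    (C : V →ₗ[ℂ] V →ₗ[ℂ] ℂ) (U : Submodule ℂ V) : Prop :=
  ∀ u ∈ U, ∀ v ∈ U, C u v = 0

open Submodule

section Isotropic

variable {V : Type*} [AddCommGroup V] [Module ℂ V] {C : V →ₗ[ℂ] V →ₗ[ℂ] ℂ} {U : Submodule ℂ V}

theorem IsIsotropic.smul (hU : IsIsotropic C U) (c : ℂ) : IsIsotropic (c • C) U :=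
  fun u hu v hv => by simp [hU u hu v hv]

theorem isIsotropic_sum {ι : Type*} (s : Finset ι) {C : ι → V →ₗ[ℂ] V →ₗ[ℂ] ℂ}
    (h : ∀ i ∈ s, IsIsotropic (C i) U) : IsIsotropic (∑ i ∈ s, C i) U :=
  fun u hu v hv => by
    simp only [LinearMap.sum_apply]
    exact Finset.sum_eq_zero fun i hi => h i hi u hu v hv

theorem isIsotropic_span {s : Set V} (h : ∀ x ∈ s, ∀ y ∈ s, C x y = 0) :
    IsIsotropic C (span ℂ s) := by
  intro u hu v hv
  have hleft : ∀ x ∈ s, span ℂ s ≤ LinearMap.ker (C x) := fun x hx =>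
    span_le.2 fun y hy => h x hx y hy
  exact (span_le.2 fun x hx => hleft x hx hv : span ℂ s ≤ LinearMap.ker (C.flip v)) hu

theorem IsIsotropic.mem_of_forall_apply_eq_zero [FiniteDimensional ℂ V]
    (hC : LinearMap.ker C = ⊥) (hU : IsIsotropic C U) (hdim : finrank ℂ V = 2 * finrank ℂ U)
    {v : V} (hv : ∀ u ∈ U, C u v = 0) : v ∈ U := by
  have hle : U ≤ LinearMap.BilinForm.orthogonal C U := fun x hx u hu => hU u hu x hx
  have hfinrank := LinearMap.BilinForm.finrank_add_finrank_orthogonal' (B := C) U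
  rw [hC, inf_bot_eq, finrank_bot, add_zero] at hfinrank
  have heq : U = LinearMap.BilinForm.orthogonal C U := eq_of_le_of_finrank_le hle (by omega)
  rw [heq]
  exact hv

end Isotropic

section Finrank

variable {K V : Type*} [Field K] [AddCommGroup V] [Module K V] [FiniteDimensional K V]

theorem Submodule.finrank_biSup_le_sum {ι : Type*} (S : ι → Submodule K V) (s : Finset ι) :
    finrank K ↥(⨆ i ∈ s, S i) ≤ ∑ i ∈ s, finrank K (S i) := by
  classical
  induction s using Finset.induction_on with
  | empty => simp
  | insert a s ha ih =>
    rw [Finset.iSup_insert, Finset.sum_insert ha]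
    exact (finrank_add_le_finrank_add_finrank _ _).trans (by omega)

theorem Submodule.ne_bot_of_le_iSup_of_finrank_le_one {ι : Type*} [Fintype ι]
    {U : Submodule K V} (S : ι → Submodule K V) (hU : U ≤ ⨆ i, S i)
    (hdim : finrank K U = Fintype.card ι) (hS : ∀ i, finrank K (S i) ≤ 1) (i : ι) :
    S i ≠ ⊥ := by
  classical
  intro hi
  have hsum := calc Fintype.card ι = finrank K U := hdim.symm
    _ ≤ finrank K ↥(⨆ j ∈ Finset.univ, S j) := by
        rw [show ⨆ j ∈ Finset.univ, S j = ⨆ j, S j by simp]; exact finrank_mono hU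
    _ ≤ ∑ j, finrank K (S j) := finrank_biSup_le_sum S _
    _ = ∑ j ∈ Finset.univ.erase i, finrank K (S j) := by
        rw [← Finset.sum_erase_add _ _ (Finset.mem_univ i), hi, finrank_bot, add_zero]
    _ ≤ (Finset.univ.erase i).card := by
        simpa using Finset.sum_le_card_nsmul (Finset.univ.erase i) _ 1 fun j _ => hS j
  rw [Finset.card_erase_of_mem (Finset.mem_univ i), Finset.card_univ] at hsum
  have : 0 < Fintype.card ι := Fintype.card_pos_iff.2 ⟨i⟩
  omega

theorem Submodule.finrank_le_finrank_inf_biInf_add_sum {ι : Type*} (U : Submodule K V)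
    (S : ι → Submodule K V) (s : Finset ι) :
    finrank K U ≤
      finrank K ↥(U ⊓ ⨅ j ∈ s, S j) + ∑ j ∈ s, (finrank K U - finrank K ↥(U ⊓ S j)) := by
  classical
  induction s using Finset.induction_on with
  | empty => rw [show ⨅ j ∈ (∅ : Finset ι), S j = ⊤ by simp, inf_top_eq]; simp
  | insert a s ha ih =>
    rw [Finset.iInf_insert, Finset.sum_insert ha, inf_inf_distrib_left]
    have hmod := finrank_sup_add_finrank_inf_eq (U ⊓ S a) (U ⊓ ⨅ j ∈ s, S j)
    have hsup := finrank_mono (sup_le (inf_le_left : U ⊓ S a ≤ U)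
      (inf_le_left : U ⊓ ⨅ j ∈ s, S j ≤ U))
    have hle := finrank_mono (inf_le_left : U ⊓ S a ≤ U)
    omega

end Finrank

namespace Module.Basis

section Blocks

variable {K V ι κ : Type*} [Field K] [AddCommGroup V] [Module K V] (b : Basis (ι × κ) K V)

/-- `b.blockSpan {i}` is `Wᵢ` and `b.blockSpan {i}ᶜ` is `Uᵢ`. -/
def blockSpan (s : Set ι) : Submodule K V :=
  span K (b '' (Prod.fst ⁻¹' s))

variable {b}

theorem mem_blockSpan_iff {s : Set ι} {x : V} :
    x ∈ b.blockSpan s ↔ ∀ p : ι × κ, p.1 ∉ s → b.repr x p = 0 := by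
  rw [blockSpan, b.mem_span_image]
  refine ⟨fun h p hp => ?_, fun h p hp => ?_⟩
  · by_contra hx
    exact hp (h (Finsupp.mem_support_iff.2 hx))
  · by_contra hs
    exact Finsupp.mem_support_iff.1 hp (h p hs)

variable (b)

theorem blockSpan_mono {s t : Set ι} (h : s ⊆ t) : b.blockSpan s ≤ b.blockSpan t :=
  span_mono (Set.image_mono (Set.preimage_mono h))

theorem iSup_blockSpan_singleton (s : Set ι) : ⨆ i ∈ s, b.blockSpan {i} = b.blockSpan s := by
  simp only [blockSpan, ← span_iUnion₂, ← Set.image_iUnion₂, ← Set.preimage_iUnion₂,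
    Set.biUnion_of_singleton]

theorem disjoint_blockSpan {s t : Set ι} (h : Disjoint s t) :
    Disjoint (b.blockSpan s) (b.blockSpan t) :=
  b.linearIndependent.disjoint_span_image (h.preimage _)

theorem iSupIndep_blockSpan_singleton : iSupIndep fun i => b.blockSpan {i} := fun i => by
  have := b.disjoint_blockSpan (disjoint_compl_right (a := {i}))
  rw [← iSup_blockSpan_singleton b {i}ᶜ] at this
  exact this

noncomputable def blockDiag (lam : ι → K) : Module.End K V :=
  b.constr K fun p => lam p.1 • b p

theorem repr_blockDiag (lam : ι → K) (x : V) (p : ι × κ) :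
    b.repr (b.blockDiag lam x) p = lam p.1 * b.repr x p := by
  have : b.coord p ∘ₗ b.blockDiag lam = lam p.1 • b.coord p := b.ext fun q => by
    by_cases h : q = p <;> simp [blockDiag, h]
  exact LinearMap.congr_fun this x

theorem iSup_eigenspace_blockDiag (lam : ι → K) : ⨆ μ, (b.blockDiag lam).eigenspace μ = ⊤ := by
  rw [eq_top_iff, ← b.span_eq, span_le]
  rintro _ ⟨p, rfl⟩
  exact le_iSup (fun μ => (b.blockDiag lam).eigenspace μ) (lam p.1)
    (Module.End.mem_eigenspace_iff.2 (by simp [blockDiag]))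

theorem repr_eq_zero_of_mem_eigenspace_blockDiag {lam : ι → K} {μ : K} {x : V}
    (hx : x ∈ (b.blockDiag lam).eigenspace μ) {p : ι × κ} (hp : lam p.1 ≠ μ) :
    b.repr x p = 0 := by
  have h := congrArg (fun y => b.repr y p) (Module.End.mem_eigenspace_iff.1 hx)
  simp only [repr_blockDiag, map_smul, Finsupp.smul_apply, smul_eq_mul] at h
  exact (mul_eq_zero.1 (by linear_combination h : (lam p.1 - μ) * b.repr x p = 0)).resolve_left
    (sub_ne_zero.2 hp)

theorem le_iSup_inf_blockSpan_of_mapsTo [FiniteDimensional K V] {lam : ι → K}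
    (hlam : Function.Injective lam) {U : Submodule K V}
    (hU : ∀ x ∈ U, b.blockDiag lam x ∈ U) : U ≤ ⨆ i, U ⊓ b.blockSpan {i} := by
  calc U = U ⊓ ⨆ μ, (b.blockDiag lam).eigenspace μ := by
        rw [iSup_eigenspace_blockDiag, inf_top_eq]
    _ = ⨆ μ, U ⊓ (b.blockDiag lam).eigenspace μ := Submodule.inf_iSup_genEigenspace hU 1
    _ ≤ ⨆ i, U ⊓ b.blockSpan {i} := iSup_le fun μ => ?_
  by_cases hμ : ∃ i, lam i = μ
  · obtain ⟨i, rfl⟩ := hμ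
    refine le_trans (inf_le_inf_left U fun x hx => ?_) (le_iSup (fun i => U ⊓ b.blockSpan {i}) i)
    exact mem_blockSpan_iff.2 fun p hp =>
      b.repr_eq_zero_of_mem_eigenspace_blockDiag hx (hlam.ne hp)
  · refine fun x hx => ?_
    have hx0 : x = 0 := b.forall_coord_eq_zero_iff.1 fun p =>
      b.repr_eq_zero_of_mem_eigenspace_blockDiag (mem_inf.1 hx).2 fun h => hμ ⟨p.1, h⟩
    exact hx0 ▸ zero_mem _

variable [FiniteDimensional K V] [Fintype ι] {U : Submodule K V}

theorem span_range_eq_of_mem_blockSpan {x : ι → V} (hxU : ∀ i, x i ∈ U)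
    (hxW : ∀ i, x i ∈ b.blockSpan {i}) (hx0 : ∀ i, x i ≠ 0)
    (hU : finrank K U = Fintype.card ι) : span K (Set.range x) = U :=
  eq_of_le_of_finrank_le (span_le.2 (Set.range_subset_iff.2 hxU)) <| by
    rw [hU, finrank_span_eq_card (b.iSupIndep_blockSpan_singleton.linearIndependent _ hxW hx0)]

theorem finrank_inf_blockSpan_compl (hU : finrank K U = Fintype.card ι)
    (h : ∀ i, U ⊓ b.blockSpan {i} ≠ ⊥) (i : ι) :
    finrank K ↥(U ⊓ b.blockSpan {i}ᶜ) = Fintype.card ι - 1 := by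
  classical
  choose x hx hx0 using fun j => (Submodule.ne_bot_iff _).1 (h j)
  have hxU j : x j ∈ U := (mem_inf.1 (hx j)).1
  have hxW j : x j ∈ b.blockSpan {j} := (mem_inf.1 (hx j)).2
  have hlower : Fintype.card ι - 1 ≤ finrank K ↥(U ⊓ b.blockSpan {i}ᶜ) := by
    have hle : span K (Set.range fun j : {j // j ≠ i} => x j) ≤ U ⊓ b.blockSpan {i}ᶜ :=
      span_le.2 <| Set.range_subset_iff.2 fun j =>
        ⟨hxU j, b.blockSpan_mono (Set.singleton_subset_iff.2 j.2) (hxW j)⟩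
    have hli : LinearIndependent K fun j : {j // j ≠ i} => x j :=
      (b.iSupIndep_blockSpan_singleton.linearIndependent _ hxW hx0).comp _ Subtype.val_injective
    have := finrank_mono hle
    rwa [finrank_span_eq_card hli, Fintype.card_subtype_compl,
      Fintype.card_subtype_eq] at this
  have hupper : finrank K ↥(U ⊓ b.blockSpan {i}ᶜ) < Fintype.card ι := by
    have hxi : x i ∉ b.blockSpan {i}ᶜ := fun hxi =>
      hx0 i (disjoint_def.1 (b.disjoint_blockSpan disjoint_compl_right) _ (hxW i) hxi)
    exact hU ▸ finrank_lt_finrank_of_lt (inf_lt_left.2 fun hle => hxi (hle (hxU i)))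
  omega

theorem inf_blockSpan_ne_bot_of_finrank_inf_blockSpan_compl
    (hU : finrank K U = Fintype.card ι)
    (h : ∀ j, finrank K ↥(U ⊓ b.blockSpan {j}ᶜ) = Fintype.card ι - 1) (i : ι) :
    U ⊓ b.blockSpan {i} ≠ ⊥ := by
  classical
  have hle : ⨅ j ∈ Finset.univ.erase i, b.blockSpan {j}ᶜ ≤ b.blockSpan {i} := fun x hx =>
    mem_blockSpan_iff.2 fun p hp => mem_blockSpan_iff.1
      ((mem_iInf _).1 ((mem_iInf _).1 hx p.1) (Finset.mem_erase.2 ⟨hp, Finset.mem_univ _⟩)) p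
      (by simp)
  have hcodim := finrank_le_finrank_inf_biInf_add_sum U (fun j => b.blockSpan {j}ᶜ)
    (Finset.univ.erase i)
  have hcard : 1 ≤ Fintype.card ι := Fintype.card_pos_iff.2 ⟨i⟩
  simp only [h, hU, Finset.sum_const, Finset.card_erase_of_mem (Finset.mem_univ i),
    Finset.card_univ, smul_eq_mul, Nat.sub_sub_self hcard, mul_one] at hcodim
  have hpos := finrank_mono (inf_le_inf_left U hle)
  intro hbot
  rw [hbot, finrank_bot] at hpos
  omega

end Blocks

section Pairs

variable {K V ι : Type*} [Field K] [AddCommGroup V] [Module K V] (b : Basis (ι × Fin 2) K V)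

theorem span_pair_eq_blockSpan (i : ι) :
    span K {b (i, 0), b (i, 1)} = b.blockSpan {i} := by
  rw [Basis.blockSpan]
  congr 1
  ext v
  simp [Fin.exists_fin_two, eq_comm]

theorem iSup_span_pair_eq_blockSpan (s : Set ι) :
    ⨆ i ∈ s, span K {b (i, 0), b (i, 1)} = b.blockSpan s := by
  simp_rw [b.span_pair_eq_blockSpan, b.iSup_blockSpan_singleton]

end Pairs

end Module.Basis

section Darboux

variable {ι V : Type*} [DecidableEq ι] [AddCommGroup V] [Module ℂ V]

/-- `B i` is the form `uᵢ* ∧ vᵢ*` for `uᵢ = b (i, 0)`, `vᵢ = b (i, 1)`. -/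
def IsDarbouxFamily (b : Basis (ι × Fin 2) ℂ V) (B : ι → V →ₗ[ℂ] V →ₗ[ℂ] ℂ) : Prop :=
  ∀ i, ∀ p q : ι × Fin 2,
    B i (b p) (b q) =
      if p = (i, 0) ∧ q = (i, 1) then 1 else if p = (i, 1) ∧ q = (i, 0) then -1 else 0

namespace IsDarbouxFamily

variable {b : Basis (ι × Fin 2) ℂ V} {B : ι → V →ₗ[ℂ] V →ₗ[ℂ] ℂ}

theorem apply (hB : IsDarbouxFamily b B) (i : ι) (x y : V) :
    B i x y = b.repr x (i, 0) * b.repr y (i, 1) - b.repr x (i, 1) * b.repr y (i, 0) := by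
  have : B i = (LinearMap.mul ℂ ℂ).compl₁₂ (b.coord (i, 0)) (b.coord (i, 1)) -
      (LinearMap.mul ℂ ℂ).compl₁₂ (b.coord (i, 1)) (b.coord (i, 0)) := by
    refine LinearMap.ext_basis b b fun p q => ?_
    rw [hB i p q]
    obtain ⟨j, s⟩ := p
    obtain ⟨k, t⟩ := q
    fin_cases s <;> fin_cases t <;> by_cases hj : j = i <;> by_cases hk : k = i <;>
      simp [hj, hk]
  simp [this]

theorem isIsotropic_span_range (hB : IsDarbouxFamily b B) {x : ι → V}
    (hx : ∀ i, x i ∈ b.blockSpan {i}) (k : ι) : IsIsotropic (B k) (span ℂ (Set.range x)) := by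
  have hxk {i : ι} (hik : i ≠ k) (t : Fin 2) : b.repr (x i) (k, t) = 0 :=
    b.mem_blockSpan_iff.1 (hx i) (k, t) (Ne.symm hik)
  refine isIsotropic_span ?_
  rintro _ ⟨i, rfl⟩ _ ⟨j, rfl⟩
  rw [hB.apply]
  by_cases hik : i = k
  · by_cases hjk : j = k
    · subst hik hjk
      ring
    · simp [hxk hjk]
  · simp [hxk hik]

variable [Fintype ι]

theorem ker_sum_eq_bot (hB : IsDarbouxFamily b B) : LinearMap.ker (∑ i, B i) = ⊥ := by
  refine eq_bot_iff.2 fun x hx => b.forall_coord_eq_zero_iff.1 fun ⟨j, t⟩ => ?_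
  have h := LinearMap.congr_fun (LinearMap.mem_ker.1 hx) (b (j, 1 - t))
  fin_cases t <;> simpa [LinearMap.sum_apply, hB.apply, Finsupp.single_apply] using h

theorem sum_smul_apply (hB : IsDarbouxFamily b B) (lam : ι → ℂ) (x y : V) :
    (∑ i, lam i • B i) x y = (∑ i, B i) x (b.blockDiag lam y) := by
  simp only [LinearMap.sum_apply, LinearMap.smul_apply, hB.apply, b.repr_blockDiag, smul_eq_mul]
  exact Finset.sum_congr rfl fun i _ => by ring

variable [FiniteDimensional ℂ V] {U : Submodule ℂ V}

theorem finrank_inf_blockSpan_le_one (hB : IsDarbouxFamily b B)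
    (hU : IsIsotropic (∑ i, B i) U) (i : ι) : finrank ℂ ↥(U ⊓ b.blockSpan {i}) ≤ 1 := by
  by_contra! h
  have hW : finrank ℂ (b.blockSpan {i}) ≤ 2 := by
    classical
    rw [← b.span_pair_eq_blockSpan]
    have := (finrank_span_finset_le_card (R := ℂ) ({b (i, 0), b (i, 1)} : Finset V)).trans
      Finset.card_le_two
    rwa [Finset.coe_pair] at this
  have heq : U ⊓ b.blockSpan {i} = b.blockSpan {i} :=
    eq_of_le_of_finrank_le inf_le_right (by omega)
  have hmem (t : Fin 2) : b (i, t) ∈ U := by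
    have : b (i, t) ∈ b.blockSpan {i} := subset_span ⟨(i, t), rfl, rfl⟩
    rw [← heq] at this
    exact this.1
  have := hU _ (hmem 0) _ (hmem 1)
  simp [LinearMap.sum_apply, hB.apply, Finsupp.single_apply] at this

theorem inf_blockSpan_ne_bot (hB : IsDarbouxFamily b B) {lam : ι → ℂ}
    (hlam : Function.Injective lam) (hU : finrank ℂ U = Fintype.card ι)
    (h₁ : IsIsotropic (∑ i, B i) U) (h₂ : IsIsotropic (∑ i, lam i • B i) U) (i : ι) :
    U ⊓ b.blockSpan {i} ≠ ⊥ := by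
  have hdim : finrank ℂ V = 2 * finrank ℂ U := by
    rw [finrank_eq_card_basis b, Fintype.card_prod, Fintype.card_fin, hU, mul_comm]
  have hinv : ∀ u ∈ U, b.blockDiag lam u ∈ U := fun u hu =>
    h₁.mem_of_forall_apply_eq_zero hB.ker_sum_eq_bot hdim fun w hw => by
      rw [← hB.sum_smul_apply]
      exact h₂ w hw u hu
  exact ne_bot_of_le_iSup_of_finrank_le_one _ (b.le_iSup_inf_blockSpan_of_mapsTo hlam hinv) hU
    (hB.finrank_inf_blockSpan_le_one h₁) i

theorem isIsotropic_of_inf_blockSpan_ne_bot (hB : IsDarbouxFamily b B)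
    (hU : finrank ℂ U = Fintype.card ι) (h : ∀ i, U ⊓ b.blockSpan {i} ≠ ⊥) (k : ι) :
    IsIsotropic (B k) U := by
  choose x hx hx0 using fun i => (Submodule.ne_bot_iff _).1 (h i)
  rw [← b.span_range_eq_of_mem_blockSpan (fun i => (mem_inf.1 (hx i)).1)
    (fun i => (mem_inf.1 (hx i)).2) hx0 hU]
  exact hB.isIsotropic_span_range (fun i => (mem_inf.1 (hx i)).2) k

end IsDarbouxFamily

end Darboux

theorem common_lagrangians_form_segre_general
    (n : ℕ)
    (V : Type*) [AddCommGroup V] [Module ℂ V]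
    (b : Basis (Fin n × Fin 2) ℂ V)
    (B : Fin n → (V →ₗ[ℂ] V →ₗ[ℂ] ℂ))
    (hB : ∀ i, ∀ p q : Fin n × Fin 2,
      B i (b p) (b q) =
        if p = (i, 0) ∧ q = (i, 1) then 1
        else if p = (i, 1) ∧ q = (i, 0) then -1 else 0)
    (lam : Fin n → ℂ) (hlam : Function.Injective lam)
    (U : Submodule ℂ V) (hU : Module.finrank ℂ U = n) :
    ((IsIsotropic (∑ i, B i) U ∧ IsIsotropic (∑ i, lam i • B i) U) ↔
      ∀ i, U ⊓ Submodule.span ℂ {b (i, 0), b (i, 1)} ≠ ⊥) ∧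
    ((∀ i, U ⊓ Submodule.span ℂ {b (i, 0), b (i, 1)} ≠ ⊥) ↔
      ∀ i, Module.finrank ℂ
          ↥(U ⊓ ⨆ j ∈ ({i}ᶜ : Set (Fin n)), Submodule.span ℂ {b (j, 0), b (j, 1)}) =
        n - 1) := by
  have : FiniteDimensional ℂ V := b.finiteDimensional_of_finite
  have hB : IsDarbouxFamily b B := hB
  have hcard : Fintype.card (Fin n) = n := Fintype.card_fin n
  replace hU : finrank ℂ U = Fintype.card (Fin n) := hU.trans hcard.symm
  simp only [b.span_pair_eq_blockSpan]
  refine ⟨⟨fun ⟨h₁, h₂⟩ => hB.inf_blockSpan_ne_bot hlam hU h₁ h₂, fun h => ⟨?_, ?_⟩⟩,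
    ⟨fun h i => ?_, fun h => b.inf_blockSpan_ne_bot_of_finrank_inf_blockSpan_compl hU ?_⟩⟩
  · exact isIsotropic_sum _ fun k _ => hB.isIsotropic_of_inf_blockSpan_ne_bot hU h k
  · exact isIsotropic_sum _ fun k _ => (hB.isIsotropic_of_inf_blockSpan_ne_bot hU h k).smul _
  · rw [b.iSup_span_pair_eq_blockSpan]
    exact (b.finrank_inf_blockSpan_compl hU h i).trans (by rw [hcard])
  · intro j
    rw [← b.iSup_span_pair_eq_blockSpan, hcard]
    exact h j

/-- With `B = B₁ + ⋯ + Bₙ` and `B' = λ₁B₁ + ⋯ + λₙBₙ` for the standard alternating forms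
`Bᵢ` attached to a basis `u₁, v₁, …, uₙ, vₙ` of `V = ℂ^{2n}`, where the `λᵢ` are pairwise
distinct and nonzero, for an `n`-dimensional subspace `U ⊆ V` the following are equivalent:
(i) `U` is isotropic for both `B` and `B'`; (ii) `U ∩ Wᵢ ≠ 0` for every `i`, where
`Wᵢ = span(uᵢ, vᵢ)`; (iii) `dim (U ∩ Uᵢ) = n − 1` for every `i`, where `Uᵢ = ⊕_{j ≠ i} Wⱼ`.
(The common Lagrangian `n`-spaces of two general `2`-forms form a Segre `n`-fold
`P¹ × ⋯ × P¹` in `G(n, 2n)`.) -/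
theorem common_lagrangians_form_segre
    (n : ℕ) (hn : 1 ≤ n)
    (V : Type*) [AddCommGroup V] [Module ℂ V] [FiniteDimensional ℂ V]
    (b : Basis (Fin n × Fin 2) ℂ V)
    (B : Fin n → (V →ₗ[ℂ] V →ₗ[ℂ] ℂ))
    (hB : ∀ i, ∀ p q : Fin n × Fin 2,
      B i (b p) (b q) =
        if p = (i, 0) ∧ q = (i, 1) then 1
        else if p = (i, 1) ∧ q = (i, 0) then -1 else 0)
    (lam : Fin n → ℂ) (hlam : Function.Injective lam) (hlam0 : ∀ i, lam i ≠ 0)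
    (U : Submodule ℂ V) (hU : Module.finrank ℂ U = n) :
    ((IsIsotropic (∑ i, B i) U ∧ IsIsotropic (∑ i, lam i • B i) U) ↔
      ∀ i, U ⊓ Submodule.span ℂ {b (i, 0), b (i, 1)} ≠ ⊥) ∧
    ((∀ i, U ⊓ Submodule.span ℂ {b (i, 0), b (i, 1)} ≠ ⊥) ↔
      ∀ i, Module.finrank ℂ
          ↥(U ⊓ ⨆ j ∈ ({i}ᶜ : Set (Fin n)), Submodule.span ℂ {b (j, 0), b (j, 1)}) =
        n - 1) :=
  common_lagrangians_form_segre_general n V b B hB lam hlam U hU
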